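/- ∏_{n≥0} [((4n+1)(8n+7)) / ((4n+2)(8n+3))]^{(-1)^{t_n}} = 1. -/

import Mathlib

/-!
With `g n = (4n+2)/(4n+3)` and `ε n = (-1)^(t n)`, the factor of the product is
`g (2n) / (g (2n+1) g n)`, while `ε (2n) = ε n` and `ε (2n+1) = -ε n`. Hence the partial product
up to `N` equals `G (2N) / G N`, where `G N = ∏_{n<N} g n ^ ε n`. The product `G N` converges to a
positive limit: grouping its logarithm in pairs gives terms `ε k log (g (2k) / g (2k+1)) = O(1/k²)`,
and the individual terms tend to `0`. So the partial products tend to `1`.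
-/

open Filter Finset Topology

/-- The Thue–Morse sequence: sum modulo 2 of the binary digits of `n`. -/
def tm (n : ℕ) : ℕ := (Nat.digits 2 n).sum % 2

theorem Filter.Tendsto.of_comp_two_mul_of_comp_two_mul_add_one {α : Type*} {u : ℕ → α}
    {l : Filter α} (h₀ : Tendsto (fun n => u (2 * n)) atTop l)
    (h₁ : Tendsto (fun n => u (2 * n + 1)) atTop l) : Tendsto u atTop l := by
  intro s hs
  obtain ⟨a, ha⟩ := eventually_atTop.1 (h₀ hs)
  obtain ⟨b, hb⟩ := eventually_atTop.1 (h₁ hs)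
  refine eventually_atTop.2 ⟨2 * a + 2 * b, fun m hm => ?_⟩
  obtain ⟨k, rfl | rfl⟩ := Nat.even_or_odd' m
  exacts [ha k (by omega), hb k (by omega)]

theorem Finset.sum_range_two_mul {M : Type*} [AddCommMonoid M] (a : ℕ → M) (N : ℕ) :
    ∑ n ∈ range (2 * N), a n = ∑ k ∈ range N, (a (2 * k) + a (2 * k + 1)) := by
  induction N with
  | zero => simp
  | succ N ih =>
    rw [show 2 * (N + 1) = 2 * N + 1 + 1 by ring, sum_range_succ, sum_range_succ, ih,
      sum_range_succ, add_assoc]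

theorem tendsto_sum_range_of_hasSum_pairs {M : Type*} [AddCommMonoid M] [TopologicalSpace M]
    [ContinuousAdd M] {a : ℕ → M} {S : M} (ha : Tendsto a atTop (𝓝 0))
    (hS : HasSum (fun k => a (2 * k) + a (2 * k + 1)) S) :
    Tendsto (fun N => ∑ n ∈ range N, a n) atTop (𝓝 S) := by
  have h_even : Tendsto (fun N => ∑ n ∈ range (2 * N), a n) atTop (𝓝 S) := by
    simpa only [sum_range_two_mul] using hS.tendsto_sum_nat
  have h_odd : Tendsto (fun N => ∑ n ∈ range (2 * N + 1), a n) atTop (𝓝 S) := by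
    simpa only [sum_range_succ, add_zero, Function.comp_def, id] using
      h_even.add (ha.comp (tendsto_id.const_mul_atTop' two_pos))
  exact h_even.of_comp_two_mul_of_comp_two_mul_add_one h_odd

theorem Real.prod_zpow_eq_exp_sum {ι : Type*} (s : Finset ι) {x : ι → ℝ} (e : ι → ℤ)
    (hx : ∀ i ∈ s, 0 < x i) : ∏ i ∈ s, x i ^ e i = Real.exp (∑ i ∈ s, e i * Real.log (x i)) := by
  rw [Real.exp_sum]
  refine prod_congr rfl fun i hi => ?_
  rw [← Real.log_zpow, Real.exp_log (zpow_pos (hx i hi) _)]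

theorem Real.abs_log_div_le {x y : ℝ} (hx : 0 < x) (hy : 0 < y) :
    |Real.log (x / y)| ≤ max (x / y - 1) (y / x - 1) := by
  rw [abs_le]
  have h₁ := Real.log_le_sub_one_of_pos (div_pos hx hy)
  have h₂ := Real.log_le_sub_one_of_pos (div_pos hy hx)
  have h₃ : Real.log (y / x) = -Real.log (x / y) := by rw [← inv_div, Real.log_inv]
  constructor <;>
    linarith [le_max_left (x / y - 1) (y / x - 1), le_max_right (x / y - 1) (y / x - 1)]

theorem tm_two_mul (n : ℕ) : tm (2 * n) = tm n := by
  rcases Nat.eq_zero_or_pos n with rfl | hn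
  · rfl
  · simp only [tm, Nat.digits_base_mul one_lt_two hn, List.sum_cons, zero_add]

theorem neg_one_pow_tm_two_mul_add_one {R : Type*} [Ring R] (n : ℕ) :
    (-1 : R) ^ tm (2 * n + 1) = -(-1) ^ tm n := by
  rw [tm, tm, add_comm, Nat.digits_add 2 one_lt_two 1 n one_lt_two (Or.inl one_ne_zero),
    List.sum_cons, ← neg_one_pow_eq_pow_mod_two, ← neg_one_pow_eq_pow_mod_two, pow_add, pow_one,
    neg_one_mul]

namespace ProdK

noncomputable def g (n : ℕ) : ℝ := (4 * n + 2) / (4 * n + 3)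

theorem g_pos (n : ℕ) : 0 < g n := by
  unfold g; positivity

theorem log_factor_eq (n : ℕ) :
    Real.log (((4 * (n : ℝ) + 1) * (8 * (n : ℝ) + 7)) / ((4 * (n : ℝ) + 2) * (8 * (n : ℝ) + 3)))
      = Real.log (g (2 * n)) - Real.log (g (2 * n + 1)) - Real.log (g n) := by
  rw [← Real.log_div (g_pos _).ne' (g_pos _).ne',
    ← Real.log_div (div_pos (g_pos _) (g_pos _)).ne' (g_pos _).ne']
  congr 1
  unfold g
  push_cast
  field_simp
  ring

noncomputable def signedLogSum (N : ℕ) : ℝ := ∑ n ∈ range N, (-1) ^ tm n * Real.log (g n)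

theorem sum_log_factor_eq (N : ℕ) :
    ∑ n ∈ range N, (-1) ^ tm n * Real.log
        (((4 * (n : ℝ) + 1) * (8 * (n : ℝ) + 7)) / ((4 * (n : ℝ) + 2) * (8 * (n : ℝ) + 3)))
      = signedLogSum (2 * N) - signedLogSum N := by
  simp only [signedLogSum, sum_range_two_mul, tm_two_mul, neg_one_pow_tm_two_mul_add_one,
    log_factor_eq, ← sum_sub_distrib]
  exact sum_congr rfl fun n _ => by ring

theorem abs_log_g_two_mul_sub_le (k : ℕ) :
    |Real.log (g (2 * k)) - Real.log (g (2 * k + 1))| ≤ 1 / ((k : ℝ) + 1) ^ 2 := by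
  rw [← Real.log_div (g_pos _).ne' (g_pos _).ne']
  refine (Real.abs_log_div_le (g_pos _) (g_pos _)).trans (max_le ?_ ?_) <;>
  · unfold g
    push_cast
    rw [div_div_div_eq, div_sub_one (by positivity),
      div_le_div_iff₀ (by positivity) (by positivity)]
    nlinarith [sq_nonneg (k : ℝ)]

theorem exists_tendsto_signedLogSum : ∃ L, Tendsto signedLogSum atTop (𝓝 L) := by
  have h_terms : Tendsto (fun n => (-1) ^ tm n * Real.log (g n)) atTop (𝓝 0) := by
    have h_g : Tendsto g atTop (𝓝 1) := by
      have h := tendsto_add_mul_div_add_mul_atTop_nhds (2 : ℝ) 3 4 four_ne_zero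
      rw [div_self four_ne_zero] at h
      exact h.congr fun n => by unfold g; ring
    refine squeeze_zero_norm (a := fun n => ‖Real.log (g n)‖) (fun n => by simp) ?_
    simpa using (h_g.log one_ne_zero).norm
  have h_pairs : Summable fun k =>
      (-1) ^ tm (2 * k) * Real.log (g (2 * k))
        + (-1) ^ tm (2 * k + 1) * Real.log (g (2 * k + 1)) := by
    refine Summable.of_norm_bounded ((summable_nat_add_iff 1).2
      (Real.summable_one_div_nat_pow.2 one_lt_two)) fun k => ?_
    simpa [tm_two_mul, neg_one_pow_tm_two_mul_add_one, ← sub_eq_add_neg, ← mul_sub, abs_mul]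
      using abs_log_g_two_mul_sub_le k
  exact ⟨_, tendsto_sum_range_of_hasSum_pairs h_terms h_pairs.hasSum⟩

end ProdK

theorem prod_k :
    Tendsto (fun N => ∏ n ∈ Finset.range N,
        ((((4 * (n : ℝ) + 1) * (8 * (n : ℝ) + 7)) / ((4 * (n : ℝ) + 2) * (8 * (n : ℝ) + 3)))) ^ ((-1 : ℤ) ^ tm n))
      atTop (𝓝 ((1 : ℝ))) := by
  obtain ⟨L, hL⟩ := ProdK.exists_tendsto_signedLogSum
  have h_diff :
      Tendsto (fun N => ProdK.signedLogSum (2 * N) - ProdK.signedLogSum N) atTop (𝓝 0) := by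
    simpa using (hL.comp (tendsto_id.const_mul_atTop' two_pos)).sub hL
  have h_exp := (Real.continuous_exp.tendsto 0).comp h_diff
  rw [Real.exp_zero] at h_exp
  refine h_exp.congr fun N => ?_
  rw [Function.comp_apply, ← ProdK.sum_log_factor_eq,
    Real.prod_zpow_eq_exp_sum _ _ fun n _ => by positivity]
  push_cast
  rfl
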